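/- Let a₁, …, a_m > 0 and b₁, …, b_m ≥ 0. If ∑_v b_v/(2√(a_v)) ≤ ∑_v a_v/(2√(a_v)), then ∑_v √(b_v) ≤ ∑_v √(a_v). -/
import Mathlib


theorem stmt_3 (m : ℕ) (a b : Fin m → ℝ) (ha : ∀ v, 0 < a v) (hb : ∀ v, 0 ≤ b v)
    (h : ∑ v, b v / (2 * Real.sqrt (a v)) ≤ ∑ v, a v / (2 * Real.sqrt (a v))) :
    ∑ v, Real.sqrt (b v) ≤ ∑ v, Real.sqrt (a v) := by
  have key : ∀ v, Real.sqrt (b v) ≤ b v / (2 * Real.sqrt (a v)) + Real.sqrt (a v) / 2 := by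
    intro v
    have hsa : 0 < Real.sqrt (a v) := Real.sqrt_pos.mpr (ha v)
    have hsq : (Real.sqrt (a v) - Real.sqrt (b v))^2 ≥ 0 := sq_nonneg _
    have hab : Real.sqrt (a v) ^ 2 = a v := Real.sq_sqrt (ha v).le
    have hbb : Real.sqrt (b v) ^ 2 = b v := Real.sq_sqrt (hb v)
    have h2 : 2 * Real.sqrt (a v) * Real.sqrt (b v) ≤ a v + b v := by nlinarith
    rw [div_add' _ _ _ (by positivity), le_div_iff₀ (by positivity)]
    nlinarith
  have heq : ∀ v, a v / (2 * Real.sqrt (a v)) = Real.sqrt (a v) / 2 := by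
    intro v
    have hsa : 0 < Real.sqrt (a v) := Real.sqrt_pos.mpr (ha v)
    have hab : Real.sqrt (a v) * Real.sqrt (a v) = a v := Real.mul_self_sqrt (ha v).le
    field_simp
    nlinarith
  calc ∑ v, Real.sqrt (b v) ≤ ∑ v, (b v / (2 * Real.sqrt (a v)) + Real.sqrt (a v) / 2) :=
        Finset.sum_le_sum fun v _ => key v
    _ = ∑ v, b v / (2 * Real.sqrt (a v)) + ∑ v, Real.sqrt (a v) / 2 := Finset.sum_add_distrib
    _ ≤ ∑ v, a v / (2 * Real.sqrt (a v)) + ∑ v, Real.sqrt (a v) / 2 := by linarith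
    _ = ∑ v, Real.sqrt (a v) / 2 + ∑ v, Real.sqrt (a v) / 2 := by simp only [heq]
    _ = ∑ v, Real.sqrt (a v) := by rw [← Finset.sum_add_distrib]; simp [add_halves]
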